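/- Let (K_i, f_i) be a projective system of c.h.p.o.'s (f_i ∈ [K_{i+1} → K_i] continuous). Then the projective limit K_∞ = lim←(K_i, f_i) is a c.h.p.o., with supremum of a directed X ⊆ K_∞ computed componentwise: ⋁X = λi. ⋁⟨x(i) | x ∈ X⟩, which belongs to K_∞ by continuity of the f_i. -/
import Mathlib


universe u v w

/-- Vertices `x, y` of an h.p.o. (the largest sub-Kan complex of a 0-∞-category, modelled
by the preorder of its vertices under the weak order `≾`) are equivalent (`x ≃ y`) if
`x ≾ y` and `y ≾ x`. -/
def HEquiv {K : Type u} [Preorder K] (x y : K) : Prop := x ≤ y ∧ y ≤ x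

/-- A sub-h.p.o. `X ⊆ K` is directed if it is nonempty and any two of its vertices admit an
upper bound in `X`. -/
def HDirected {K : Type u} [Preorder K] (X : Set K) : Prop :=
  X.Nonempty ∧ ∀ x ∈ X, ∀ y ∈ X, ∃ z ∈ X, x ≤ z ∧ y ≤ z

/-- An h.p.o. `K` is a complete homotopy partial order (c.h.p.o.) if it has a minimum element
and every directed sub-h.p.o. has a supremum (a least upper bound, unique up to `HEquiv`). -/
def IsCHPO (K : Type u) [Preorder K] : Prop :=
  (∃ b : K, ∀ x, b ≤ x) ∧ ∀ X : Set K, HDirected X → ∃ s, IsLUB X s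

/-- A functor `f : K → K'` of c.h.p.o.'s is continuous if `f(⋁X) ≃ ⋁ f(X)` for every
directed `X ⊆ K`, i.e. `f` sends any supremum of a directed set to a supremum of its image. -/
def HContinuous {K : Type u} {K' : Type v} [Preorder K] [Preorder K'] (f : K → K') : Prop :=
  ∀ X : Set K, HDirected X → ∀ s : K, IsLUB X s → IsLUB (f '' X) (f s)

/-- `[K → K']`: the h.p.o. of continuous functors from `K` to `K'`. -/
def ContHom (K : Type u) (K' : Type v) [Preorder K] [Preorder K'] : Type (max u v) :=
  {f : K → K' // HContinuous f}

/-- The pointwise order on `[K → K']`: `f ≾ g` iff `f x ≾ g x` for all `x ∈ K`. -/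
instance ContHom.instPreorder {K : Type u} {K' : Type v} [Preorder K] [Preorder K'] :
    Preorder (ContHom K K') :=
  Preorder.lift (fun f => (f.1 : K → K'))

/-- The projective (inverse) limit `K_∞ = lim←(K_i, f_i)` of a projective system of
c.h.p.o.'s: sequences `(x_i)_i` with `f_i (x_{i+1}) ≃ x_i`, ordered componentwise
(`(x_i)_i ≾_∞ (y_i)_i` iff `x_i ≾_i y_i` for all `i`). -/
def ProjLim (K : ℕ → Type u) [∀ i, Preorder (K i)] (f : ∀ i, K (i + 1) → K i) : Type u :=
  {x : ∀ i, K i // ∀ i, HEquiv (f i (x (i + 1))) (x i)}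

/-- The componentwise order on the projective limit. -/
instance ProjLim.instPreorder (K : ℕ → Type u) [∀ i, Preorder (K i)]
    (f : ∀ i, K (i + 1) → K i) : Preorder (ProjLim K f) :=
  Preorder.lift (fun x => (x.1 : ∀ i, K i))


/-- Auxiliary: continuous maps are monotone. -/
theorem HContinuous.monotone' {K : Type u} {K' : Type v} [Preorder K] [Preorder K'] {f : K → K'}
    (hf : HContinuous f) : Monotone f := by
  intro x y h
  have hay : ∀ a ∈ ({x, y} : Set K), a ≤ y := by
    rintro a (rfl | rfl)
    · exact h
    · exact le_refl _
  have hd : HDirected ({x, y} : Set K) :=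
    ⟨⟨x, by simp⟩, fun a ha b hb => ⟨y, by simp, hay a ha, hay b hb⟩⟩
  have hlub : IsLUB ({x, y} : Set K) y := ⟨hay, fun c hc => hc (by simp)⟩
  exact (hf _ hd y hlub).1 ⟨x, by simp, rfl⟩

/-- Auxiliary: two mutually dominating sets have the same upper bounds. -/
theorem ubEq_of_dom {K : Type u} [Preorder K] {A B : Set K}
    (h1 : ∀ a ∈ A, ∃ b ∈ B, a ≤ b) (h2 : ∀ b ∈ B, ∃ a ∈ A, b ≤ a) :
    upperBounds A = upperBounds B := by
  ext u
  constructor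
  · intro hu b hb
    obtain ⟨a, ha, hba⟩ := h2 b hb
    exact hba.trans (hu ha)
  · intro hu a ha
    obtain ⟨b, hb, hab⟩ := h1 a ha
    exact hab.trans (hu hb)

/-- Auxiliary: the `n`-th approximation to the bottom thread of a projective limit. -/
def projApprox (K : ℕ → Type u) (f : ∀ i, K (i + 1) → K i) (bot : ∀ i, K i) :
    ℕ → ∀ i, K i
  | 0 => bot
  | n + 1 => fun i => f i (projApprox K f bot n (i + 1))

/-- Let `(K_i, f_i)` be a projective system of c.h.p.o.'s (each `f_i ∈ [K_{i+1} → K_i]`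
continuous).  Then the projective limit `K_∞ = lim←(K_i, f_i)` is a c.h.p.o., and the
supremum of a directed `X ⊆ K_∞` is computed componentwise: `⋁X = λ i. ⋁⟨x i | x ∈ X⟩`,
which belongs to `K_∞` by the continuity of the `f_i`. -/
theorem projLim_isCHPO (K : ℕ → Type u) [∀ i, Preorder (K i)]
    (f : ∀ i, K (i + 1) → K i) (hK : ∀ i, IsCHPO (K i)) (hf : ∀ i, HContinuous (f i)) :
    IsCHPO (ProjLim K f) ∧
      ∀ X : Set (ProjLim K f), HDirected X →
        ∃ s : ProjLim K f,
          (∀ i, IsLUB ((fun x : ProjLim K f => x.1 i) '' X) (s.1 i)) ∧ IsLUB X s := by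
  have hmono : ∀ i, Monotone (f i) := fun i => (hf i).monotone'
  -- the supremum construction
  have main : ∀ X : Set (ProjLim K f), HDirected X →
      ∃ s : ProjLim K f,
        (∀ i, IsLUB ((fun x : ProjLim K f => x.1 i) '' X) (s.1 i)) ∧ IsLUB X s := by
    intro X hX
    set Xi : ∀ i, Set (K i) := fun i => (fun x : ProjLim K f => x.1 i) '' X with hXi
    have hXid : ∀ i, HDirected (Xi i) := by
      intro i
      refine ⟨hX.1.image _, ?_⟩
      rintro _ ⟨x, hx, rfl⟩ _ ⟨y, hy, rfl⟩
      obtain ⟨z, hz, hxz, hyz⟩ := hX.2 x hx y hy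
      exact ⟨z.1 i, ⟨z, hz, rfl⟩, hxz i, hyz i⟩
    set s : ∀ i, K i := fun i => ((hK i).2 (Xi i) (hXid i)).choose with hs
    have hslub : ∀ i, IsLUB (Xi i) (s i) := fun i => ((hK i).2 (Xi i) (hXid i)).choose_spec
    have hthread : ∀ i, HEquiv (f i (s (i + 1))) (s i) := by
      intro i
      have h1 : IsLUB (f i '' Xi (i + 1)) (f i (s (i + 1))) :=
        hf i (Xi (i + 1)) (hXid (i + 1)) _ (hslub (i + 1))
      have hub : upperBounds (f i '' Xi (i + 1)) = upperBounds (Xi i) := by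
        apply ubEq_of_dom
        · rintro _ ⟨_, ⟨x, hx, rfl⟩, rfl⟩
          exact ⟨x.1 i, ⟨x, hx, rfl⟩, (x.2 i).1⟩
        · rintro _ ⟨x, hx, rfl⟩
          exact ⟨f i (x.1 (i + 1)), ⟨x.1 (i + 1), ⟨x, hx, rfl⟩, rfl⟩, (x.2 i).2⟩
      have h2 : IsLUB (Xi i) (f i (s (i + 1))) := by
        constructor
        · exact hub ▸ h1.1
        · intro c hc
          exact h1.2 (hub ▸ hc)
      exact ⟨h2.2 (hslub i).1, (hslub i).2 h2.1⟩
    refine ⟨⟨s, hthread⟩, fun i => hslub i, ?_, ?_⟩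
    · intro x hx i
      exact (hslub i).1 ⟨x, hx, rfl⟩
    · intro u hu i
      refine (hslub i).2 ?_
      rintro _ ⟨x, hx, rfl⟩
      exact hu hx i
  refine ⟨⟨?_, fun X hX => (main X hX).elim fun s hs => ⟨s, hs.2⟩⟩, main⟩
  -- the bottom element
  set bot : ∀ i, K i := fun i => (hK i).1.choose with hbotdef
  have hbot : ∀ i (x : K i), bot i ≤ x := fun i => (hK i).1.choose_spec
  set a : ℕ → ∀ i, K i := projApprox K f bot with ha
  have ha0 : ∀ i, a 0 i = bot i := fun i => rfl
  have haS : ∀ n i, a (n + 1) i = f i (a n (i + 1)) := fun n i => rfl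
  have hstep : ∀ n i, a n i ≤ a (n + 1) i := by
    intro n
    induction n with
    | zero => intro i; exact hbot i _
    | succ n ih =>
      intro i
      rw [haS, haS]
      exact hmono i (ih (i + 1))
  have hamono : ∀ i, Monotone (fun n => a n i) :=
    fun i => monotone_nat_of_le_succ (fun n => hstep n i)
  set C : ∀ i, Set (K i) := fun i => Set.range (fun n => a n i) with hC
  have hCd : ∀ i, HDirected (C i) := by
    intro i
    refine ⟨⟨a 0 i, 0, rfl⟩, ?_⟩
    rintro _ ⟨n, rfl⟩ _ ⟨m, rfl⟩
    exact ⟨a (max n m) i, ⟨max n m, rfl⟩, hamono i (le_max_left n m),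
      hamono i (le_max_right n m)⟩
  set b : ∀ i, K i := fun i => ((hK i).2 (C i) (hCd i)).choose with hb
  have hblub : ∀ i, IsLUB (C i) (b i) := fun i => ((hK i).2 (C i) (hCd i)).choose_spec
  have hbthread : ∀ i, HEquiv (f i (b (i + 1))) (b i) := by
    intro i
    have h1 : IsLUB (f i '' C (i + 1)) (f i (b (i + 1))) :=
      hf i (C (i + 1)) (hCd (i + 1)) _ (hblub (i + 1))
    have hub : upperBounds (f i '' C (i + 1)) = upperBounds (C i) := by
      apply ubEq_of_dom
      · rintro _ ⟨_, ⟨n, rfl⟩, rfl⟩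
        exact ⟨a (n + 1) i, ⟨n + 1, rfl⟩, le_of_eq (haS n i).symm⟩
      · rintro _ ⟨n, rfl⟩
        exact ⟨f i (a n (i + 1)), ⟨a n (i + 1), ⟨n, rfl⟩, rfl⟩,
          (haS n i) ▸ hstep n i⟩
    have h2 : IsLUB (C i) (f i (b (i + 1))) :=
      ⟨hub ▸ h1.1, fun c hc => h1.2 (hub ▸ hc)⟩
    exact ⟨h2.2 (hblub i).1, (hblub i).2 h2.1⟩
  refine ⟨⟨b, hbthread⟩, ?_⟩
  intro x
  have key : ∀ n i, a n i ≤ x.1 i := by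
    intro n
    induction n with
    | zero => intro i; exact hbot i _
    | succ n ih =>
      intro i
      rw [haS]
      exact le_trans (hmono i (ih (i + 1))) (x.2 i).1
  intro i
  refine (hblub i).2 ?_
  rintro _ ⟨n, rfl⟩
  exact key n i
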